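/- Let 0 ≤ l ≤ n. Then, as a permutation of I_n, a_l(i) = i − 1 − l for 1 ≤ i ≤ l and a_l(i) = i for l+1 ≤ i ≤ n; and ℓ(a_l) = l(l+1)/2. -/

import Mathlib

/-!
Common setup: the Weyl group `W n` of type `B_n`, realized as the group of
permutations `w` of `I_n = {±1, …, ±n}` (inside `Equiv.Perm ℤ`, fixing every
integer of absolute value `> n`) such that `w (-i) = - w i` for all `i`.
-/

namespace TypeB

/-- The generator `t = (1, -1)`. -/
def t : Equiv.Perm ℤ := Equiv.swap 1 (-1)

/-- The generator `s i = (i, i+1)(-i, -(i+1))` (meaningful for `1 ≤ i`). -/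
def s (i : ℕ) : Equiv.Perm ℤ :=
  Equiv.swap (i : ℤ) ((i : ℤ) + 1) * Equiv.swap (-(i : ℤ)) (-((i : ℤ) + 1))

/-- The generating set `S_n = {t, s_1, …, s_{n-1}}`. -/
def gens (n : ℕ) : Set (Equiv.Perm ℤ) :=
  {t} ∪ {x | ∃ i : ℕ, 1 ≤ i ∧ i < n ∧ x = s i}

/-- The Weyl group `W_n` of type `B_n`, as a subgroup of `Equiv.Perm ℤ`:
permutations `w` with `w (-i) = - (w i)` for all `i` and fixing all `i` with `|i| > n`. -/
def W (n : ℕ) : Subgroup (Equiv.Perm ℤ) where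
  carrier := {w | (∀ i : ℤ, w (-i) = - w i) ∧ ∀ i : ℤ, (n : ℤ) < |i| → w i = i}
  one_mem' := ⟨fun _ => rfl, fun _ _ => rfl⟩
  mul_mem' := by
    rintro u v ⟨hu1, hu2⟩ ⟨hv1, hv2⟩
    refine ⟨fun i => ?_, fun i hi => ?_⟩
    · simp only [Equiv.Perm.mul_apply, hv1, hu1]
    · simp only [Equiv.Perm.mul_apply, hv2 i hi, hu2 i hi]
  inv_mem' := by
    rintro u ⟨hu1, hu2⟩
    refine ⟨fun i => ?_, fun i hi => ?_⟩
    · apply u.injective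
      rw [(show ∀ x, u (u⁻¹ x) = x from u.apply_symm_apply), hu1, (show ∀ x, u (u⁻¹ x) = x from u.apply_symm_apply)]
    · apply u.injective
      rw [(show ∀ x, u (u⁻¹ x) = x from u.apply_symm_apply), hu2 i hi]

/-- The length of `w` with respect to the generating set `S_n`. -/
noncomputable def len (n : ℕ) (w : Equiv.Perm ℤ) : ℕ :=
  sInf {k | ∃ l : List (Equiv.Perm ℤ), (∀ x ∈ l, x ∈ gens n) ∧ l.prod = w ∧ l.length = k}

/-- `l` is a reduced expression for `w` with respect to `S_n`. -/
def IsReduced (n : ℕ) (w : Equiv.Perm ℤ) (l : List (Equiv.Perm ℤ)) : Prop :=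
  (∀ x ∈ l, x ∈ gens n) ∧ l.prod = w ∧ l.length = len n w

/-- `ℓ_t w`: the number of occurrences of `t` in a reduced expression of `w`
(independent of the chosen reduced expression). -/
noncomputable def lent (n : ℕ) (w : Equiv.Perm ℤ) : ℕ :=
  letI : DecidableEq (Equiv.Perm ℤ) := Classical.decEq _
  sInf {m | ∃ l, IsReduced n w l ∧ l.count t = m}

/-- `r 1 = t` and `r (i+1) = s i * r i`. -/
def r : ℕ → Equiv.Perm ℤ
  | 0 => 1
  | 1 => t
  | (i + 2) => s (i + 1) * r (i + 1)

/-- `t_1 = t` and `t_{i+1} = s_i * t_i * s_i`. -/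
def tperm : ℕ → Equiv.Perm ℤ
  | 0 => 1
  | 1 => t
  | (i + 2) => s (i + 1) * tperm (i + 1) * s (i + 1)

/-- `a l = r 1 * r 2 * ⋯ * r l`, with `a 0 = 1`. -/
def a : ℕ → Equiv.Perm ℤ
  | 0 => 1
  | (l + 1) => a l * r (l + 1)

/-- The symmetric group `𝔖_n`: the subgroup generated by `s_1, …, s_{n-1}`. -/
def Sym (n : ℕ) : Subgroup (Equiv.Perm ℤ) :=
  Subgroup.closure {x | ∃ i : ℕ, 1 ≤ i ∧ i < n ∧ x = s i}

/-- The parabolic subgroup `𝔖_{l,n-l}`: generated by `{s_1, …, s_{n-1}} \ {s_l}`. -/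
def SymP (n l : ℕ) : Subgroup (Equiv.Perm ℤ) :=
  Subgroup.closure {x | ∃ i : ℕ, 1 ≤ i ∧ i < n ∧ i ≠ l ∧ x = s i}

/-- `Y_{l,n-l}`: elements of `𝔖_n` of minimal length in their coset `w 𝔖_{l,n-l}`. -/
def Y (n l : ℕ) : Set (Equiv.Perm ℤ) :=
  {w | w ∈ Sym n ∧ ∀ u ∈ SymP n l, len n w ≤ len n (w * u)}

/-- The subgroup `𝔖_{[i,j]}` generated by `s_i, …, s_{j-1}`. -/
def SymI (i j : ℕ) : Subgroup (Equiv.Perm ℤ) :=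
  Subgroup.closure {x | ∃ k : ℕ, i ≤ k ∧ k < j ∧ x = s k}

/-- The function reversing the interval `[i,j]` (and `[-j,-i]`), for `1 ≤ i`. -/
def revFun (i j : ℤ) : ℤ → ℤ := fun k =>
  if 1 ≤ i ∧ i ≤ k ∧ k ≤ j then i + j - k
  else if 1 ≤ i ∧ -j ≤ k ∧ k ≤ -i then -(i + j) - k
  else k

lemma revFun_involutive (i j : ℤ) : Function.Involutive (revFun i j) := by
  intro k
  unfold revFun
  split_ifs <;> omega

/-- `σ_{[i,j]}`: the longest element of `𝔖_{[i,j]}`, i.e. the order-reversing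
permutation of the interval `[i,j]` (extended to `I_n` by `w(-k) = -w(k)`). -/
def sigmaI (i j : ℕ) : Equiv.Perm ℤ := (revFun_involutive (i : ℤ) (j : ℤ)).toPerm

/-- `σ_{l,n-l}`: the longest element of `𝔖_{l,n-l} = 𝔖_{[1,l]} × 𝔖_{[l+1,n]}`. -/
def sigmaLL (n l : ℕ) : Equiv.Perm ℤ := sigmaI 1 l * sigmaI (l + 1) n

/-- The function negating all `k` with `|k| ≤ n`. -/
def negnFun (n : ℤ) : ℤ → ℤ := fun k => if -n ≤ k ∧ k ≤ n then -k else k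

lemma negnFun_involutive (n : ℤ) : Function.Involutive (negnFun n) := by
  intro k
  unfold negnFun
  split_ifs <;> omega

/-- `w_n`: the longest element of `W_n`; as a permutation, `w_n i = -i` for `|i| ≤ n`. -/
def wlong (n : ℕ) : Equiv.Perm ℤ := (negnFun_involutive (n : ℤ)).toPerm

/-- `c_I = s_{i_1} s_{i_2} ⋯ s_{i_k}` for `I = {i_1 < i_2 < ⋯ < i_k}`. -/
def cElt (I : Finset ℕ) : Equiv.Perm ℤ := ((I.sort (· ≤ ·)).map s).prod

/-- `d_I = s_{i_k} ⋯ s_{i_2} s_{i_1}` for `I = {i_1 < i_2 < ⋯ < i_k}`. -/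
def dElt (I : Finset ℕ) : Equiv.Perm ℤ := (((I.sort (· ≤ ·)).map s).reverse).prod

/-- `X_n^{(m)}`: elements of `W_n` of minimal length in their coset `w W_m`. -/
def X (n m : ℕ) : Set (Equiv.Perm ℤ) :=
  {w | w ∈ W n ∧ ∀ u ∈ W m, len n w ≤ len n (w * u)}

/-- Bruhat order: `x ≤ y` iff some reduced expression of `y` contains a subword
which is a reduced expression of `x`. -/
def BruhatLE (n : ℕ) (x y : Equiv.Perm ℤ) : Prop :=
  ∃ ly, IsReduced n y ly ∧ ∃ lx, lx.Sublist ly ∧ IsReduced n x lx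

/-- Strict Bruhat order. -/
def BruhatLT (n : ℕ) (x y : Equiv.Perm ℤ) : Prop := BruhatLE n x y ∧ x ≠ y

/-- `D_i(W_n)`: the set of `x` such that exactly one of `s_i, s_{i+1}` is a
(right) descent of `x`. -/
def Dset (n i : ℕ) : Set (Equiv.Perm ℤ) :=
  {x | Xor' (len n (x * s i) < len n x) (len n (x * s (i + 1)) < len n x)}

open Classical in
/-- `γ_i x`: the unique element of `{x s_i, x s_{i+1}} ∩ D_i(W_n)` (for `x ∈ D_i(W_n)`). -/
noncomputable def gamma (n i : ℕ) (x : Equiv.Perm ℤ) : Equiv.Perm ℤ :=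
  if x * s i ∈ Dset n i then x * s i else x * s (i + 1)

/-- `E_m^{(r)}`: the set of `w ∈ W_m` such that `|w 1| > |w i|` for `2 ≤ i ≤ r+2`
and `(w 2, …, w (r+2))` is a shuffle of a positive decreasing sequence and a
negative increasing sequence. -/
def E (m ρ : ℕ) : Set (Equiv.Perm ℤ) :=
  {w | w ∈ W m ∧ (∀ i : ℕ, 2 ≤ i → i ≤ ρ + 2 → |w (i : ℤ)| < |w (1 : ℤ)|) ∧
    ∀ i j : ℕ, 2 ≤ i → i < j → j ≤ ρ + 2 →
      (0 < w (i : ℤ) → 0 < w (j : ℤ) → w (j : ℤ) < w (i : ℤ)) ∧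
      (w (i : ℤ) < 0 → w (j : ℤ) < 0 → w (i : ℤ) < w (j : ℤ))}

/-- The product `r_{i_1} ⋯ r_{i_l}` for a sequence `i : Fin l → ℕ`. -/
def prodR {l : ℕ} (i : Fin l → ℕ) : Equiv.Perm ℤ := (List.ofFn fun k => r (i k)).prod

/-- `(l, α, β, σ)` is a decomposition of `w` as in the decomposition lemma:
`l ≤ n`, `α, β ∈ Y_{l,n-l}`, `σ ∈ 𝔖_{l,n-l}` and `w = α a_l σ β⁻¹`. -/
def IsDecomp (n : ℕ) (w : Equiv.Perm ℤ) (l : ℕ) (α β σ : Equiv.Perm ℤ) : Prop :=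
  l ≤ n ∧ α ∈ Y n l ∧ β ∈ Y n l ∧ σ ∈ SymP n l ∧ w = α * a l * σ * β⁻¹

/-!
`r_{k+1}` maps `1 ↦ -(k+1)` and `i ↦ i - 1` for `2 ≤ i ≤ k+1`, so composing these cycles
gives the formula for `a_l`. The word `r_1 (s_1 r_1) (s_2 s_1 r_1) ⋯` shows `ℓ(a_l) ≤ 1 + 2 + ⋯ + l`.
Conversely, the statistic `∑_{i=1}^n max(0, -w(i))` grows by at most one when `w` is multiplied
on the left by a generator, vanishes at `1` and equals `1 + 2 + ⋯ + l` at `a_l`.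
-/

lemma t_apply (x : ℤ) : t x = if x = 1 then -1 else if x = -1 then 1 else x :=
  Equiv.swap_apply_def 1 (-1) x

lemma s_apply {i : ℕ} (hi : 1 ≤ i) (x : ℤ) :
    s i x = if x = i then (i : ℤ) + 1 else if x = (i : ℤ) + 1 then (i : ℤ)
      else if x = -i then -((i : ℤ) + 1) else if x = -((i : ℤ) + 1) then -(i : ℤ) else x := by
  simp only [s, Equiv.Perm.mul_apply, Equiv.swap_apply_def]
  split_ifs <;> omega

lemma r_succ_apply (k : ℕ) (x : ℤ) :
    r (k + 1) x = if x = 1 then -((k : ℤ) + 1) else if 2 ≤ x ∧ x ≤ (k : ℤ) + 1 then x - 1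
      else if x = -1 then (k : ℤ) + 1 else if -((k : ℤ) + 1) ≤ x ∧ x ≤ -2 then x + 1 else x := by
  induction k generalizing x with
  | zero => simp only [r, t_apply]; split_ifs <;> omega
  | succ k ih =>
    rw [show r (k + 2) = s (k + 1) * r (k + 1) from rfl, Equiv.Perm.mul_apply, ih,
      s_apply (by omega)]
    split_ifs <;> omega

lemma a_apply (l : ℕ) (x : ℤ) :
    a l x = if 1 ≤ x ∧ x ≤ l then x - 1 - l
      else if -(l : ℤ) ≤ x ∧ x ≤ -1 then x + 1 + l else x := by
  induction l generalizing x with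
  | zero => simp only [a, Equiv.Perm.one_apply]; split_ifs <;> omega
  | succ l ih =>
    rw [a, Equiv.Perm.mul_apply, r_succ_apply, ih]
    split_ifs <;> omega

section Length

variable {n : ℕ}

lemma len_prod_le_length {L : List (Equiv.Perm ℤ)} (hL : ∀ x ∈ L, x ∈ gens n) :
    len n L.prod ≤ L.length :=
  Nat.sInf_le ⟨L, hL, rfl, rfl⟩

lemma le_len_of_le_add_one {f : Equiv.Perm ℤ → ℕ} (hf₁ : f 1 = 0)
    (hf : ∀ g ∈ gens n, ∀ w, f (g * w) ≤ f w + 1) {L : List (Equiv.Perm ℤ)}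
    (hL : ∀ x ∈ L, x ∈ gens n) : f L.prod ≤ len n L.prod := by
  obtain ⟨L', hL', hprod, hlen⟩ : ∃ L' : List (Equiv.Perm ℤ), (∀ x ∈ L', x ∈ gens n) ∧
      L'.prod = L.prod ∧ L'.length = len n L.prod :=
    Nat.sInf_mem (s := {k | ∃ L' : List (Equiv.Perm ℤ), (∀ x ∈ L', x ∈ gens n) ∧
      L'.prod = L.prod ∧ L'.length = k}) ⟨_, L, hL, rfl, rfl⟩
  rw [← hlen, ← hprod]
  clear hL hprod hlen
  induction L' with
  | nil => simp [hf₁]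
  | cons g L' ih =>
    rw [List.prod_cons, List.length_cons]
    exact (hf g (hL' g (.head _)) _).trans
      (Nat.add_le_add_right (ih fun x hx => hL' x (.tail _ hx)) 1)

lemma exists_word_r {k : ℕ} (hk : k ≤ n) :
    ∃ L : List (Equiv.Perm ℤ), (∀ x ∈ L, x ∈ gens n) ∧ L.prod = r k ∧ L.length = k := by
  induction k with
  | zero => exact ⟨[], by simp, rfl, rfl⟩
  | succ k ih =>
    rcases k with _ | k
    · exact ⟨[t], by simp [gens], by simp [r], rfl⟩
    obtain ⟨L, hL, hprod, hlen⟩ := ih (by omega)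
    refine ⟨s (k + 1) :: L, ?_, by rw [List.prod_cons, hprod]; rfl, by simp [hlen]⟩
    rintro x (_ | ⟨_, hx⟩)
    exacts [Or.inr ⟨k + 1, by omega, by omega, rfl⟩, hL x hx]

lemma exists_word_a {l : ℕ} (hl : l ≤ n) :
    ∃ L : List (Equiv.Perm ℤ), (∀ x ∈ L, x ∈ gens n) ∧ L.prod = a l ∧
      L.length = ∑ k ∈ Finset.range (l + 1), k := by
  induction l with
  | zero => exact ⟨[], by simp, rfl, rfl⟩
  | succ l ih =>
    obtain ⟨L, hL, hprod, hlen⟩ := ih (by omega)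
    obtain ⟨R, hR, hRprod, hRlen⟩ := exists_word_r (n := n) hl
    refine ⟨L ++ R, ?_, by rw [List.prod_append, hprod, hRprod]; rfl, ?_⟩
    · simpa only [List.mem_append] using fun x hx => hx.elim (hL x) (hR x)
    · rw [List.length_append, hlen, hRlen, Finset.sum_range_succ _ (l + 1)]

end Length

def negSum (n : ℕ) (w : Equiv.Perm ℤ) : ℕ := ∑ i ∈ Finset.range n, (-w ((i : ℤ) + 1)).toNat

lemma negSum_one (n : ℕ) : negSum n 1 = 0 :=
  Finset.sum_eq_zero fun i _ => by simp only [Equiv.Perm.one_apply]; omega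

lemma exists_toNat_neg_apply_le {n : ℕ} {g : Equiv.Perm ℤ} (hg : g ∈ gens n) :
    ∃ c : ℤ, ∀ v : ℤ, (-g v).toNat ≤ (-v).toNat + if v = c then 1 else 0 := by
  rcases hg with rfl | ⟨i, hi, -, rfl⟩
  · exact ⟨1, fun v => by rw [t_apply]; split_ifs <;> omega⟩
  · exact ⟨-i, fun v => by rw [s_apply hi]; split_ifs <;> omega⟩

lemma negSum_gens_mul_le {n : ℕ} {g : Equiv.Perm ℤ} (hg : g ∈ gens n) (w : Equiv.Perm ℤ) :
    negSum n (g * w) ≤ negSum n w + 1 := by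
  obtain ⟨c, hc⟩ := exists_toNat_neg_apply_le hg
  have hfiber : (Finset.range n |>.filter fun i : ℕ => w ((i : ℤ) + 1) = c).card ≤ 1 :=
    Finset.card_le_one.mpr fun p hp q hq => by
      simp only [Finset.mem_filter] at hp hq
      exact_mod_cast add_right_cancel (w.injective (hp.2.trans hq.2.symm))
  calc negSum n (g * w)
      ≤ ∑ i ∈ Finset.range n, ((-w ((i : ℤ) + 1)).toNat + if w ((i : ℤ) + 1) = c then 1 else 0) :=
        Finset.sum_le_sum fun i _ => hc _
    _ = negSum n w + (Finset.range n |>.filter fun i : ℕ => w ((i : ℤ) + 1) = c).card := by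
        rw [Finset.sum_add_distrib, Finset.card_filter]; rfl
    _ ≤ negSum n w + 1 := Nat.add_le_add_left hfiber _

lemma negSum_a {n l : ℕ} (hl : l ≤ n) : negSum n (a l) = ∑ k ∈ Finset.range (l + 1), k := by
  have hterm : ∀ i ∈ Finset.range n, (-a l ((i : ℤ) + 1)).toNat = if i < l then l - i else 0 := by
    intro i _
    rw [a_apply]
    split_ifs <;> omega
  rw [negSum, Finset.sum_congr rfl hterm, ← Finset.sum_filter,
    show {i ∈ Finset.range n | i < l} = Finset.range l by
      ext; simp only [Finset.mem_filter, Finset.mem_range]; omega,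
    Finset.sum_range_succ', ← Finset.sum_range_reflect]
  exact Finset.sum_congr rfl fun i hi => by have := Finset.mem_range.mp hi; omega

lemma len_a {n l : ℕ} (hl : l ≤ n) : len n (a l) = ∑ k ∈ Finset.range (l + 1), k := by
  obtain ⟨L, hL, hprod, hlen⟩ := exists_word_a hl
  refine le_antisymm (hlen ▸ hprod ▸ len_prod_le_length hL) ?_
  rw [← negSum_a hl, ← hprod]
  exact le_len_of_le_add_one (negSum_one n) (fun _ hg => negSum_gens_mul_le hg) hL

/-- for `0 ≤ l ≤ n`, as a permutation `a_l(i) = i - 1 - l` for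
`1 ≤ i ≤ l` and `a_l(i) = i` for `l+1 ≤ i ≤ n`; and `ℓ(a_l) = l(l+1)/2`. -/
theorem stmt16 (n l : ℕ) (hl : l ≤ n) :
    (∀ i : ℕ, 1 ≤ i → i ≤ l → a l (i : ℤ) = (i : ℤ) - 1 - (l : ℤ)) ∧
    (∀ i : ℕ, l + 1 ≤ i → i ≤ n → a l (i : ℤ) = (i : ℤ)) ∧
    len n (a l) = l * (l + 1) / 2 := by
  refine ⟨fun i hi hil => ?_, fun i hli _ => ?_, ?_⟩
  · rw [a_apply, if_pos (by omega)]
  · rw [a_apply, if_neg (by omega), if_neg (by omega)]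
  · rw [len_a hl, Finset.sum_range_id, Nat.add_sub_cancel, mul_comm]

end TypeB
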